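/- arXiv:2011.09761 — 6 statements merged into one kernel-verified Lean document; each statement's English description precedes it below -/
import Mathlib

section
/- Every sequence of n distinct real numbers can be partitioned into at most 2⌈√n⌉ monotone subsequences, i.e., the index set Fin n can be partitioned into at most 2⌈√n⌉ sets, on each of which the sequence is strictly monotone. -/
/-!
Erdős–Szekeres: if `a` is injective on a finite set `S` with `k * k < #S`, then `S` contains a
strictly monotone subset with more than `k` elements, because sending `i` to the lengths of the
longest increasing and the longest decreasing chain of `S` ending at `i` is injective on `S`
with values in `[1, k] × [1, k]` otherwise. Peeling off two such subsets brings a set of size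
at most `(k + 1) ^ 2` down to size at most `k ^ 2`, so by induction on `k` a set of size at most
`k ^ 2` splits into `2 * k` monotone pieces; take `k = ⌈√n⌉`.
-/

open Finset OrderDual

section

variable {ι β : Type*} [Preorder ι] [Preorder β]

def StrictMonoOrAntiOn (a : ι → β) (s : Set ι) : Prop :=
  StrictMonoOn a s ∨ StrictAntiOn a s

def MonotoneColorable (a : ι → β) (s : Set ι) (m : ℕ) : Prop :=
  ∃ c : ι → ℕ, (∀ i ∈ s, c i < m) ∧ ∀ j, StrictMonoOrAntiOn a {i | i ∈ s ∧ c i = j}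

variable {a : ι → β} {s t : Set ι} {m n : ℕ}

theorem StrictMonoOrAntiOn.mono (h : StrictMonoOrAntiOn a t) (hst : s ⊆ t) :
    StrictMonoOrAntiOn a s :=
  h.imp (·.mono hst) (·.mono hst)

theorem monotoneColorable_empty : MonotoneColorable a ∅ m :=
  ⟨0, fun _ hi => hi.elim, fun _ => Or.inl fun _ hi => hi.1.elim⟩

theorem MonotoneColorable.mono (hmn : m ≤ n) (h : MonotoneColorable a s m) :
    MonotoneColorable a s n :=
  let ⟨c, hlt, hc⟩ := h
  ⟨c, fun i hi => (hlt i hi).trans_le hmn, hc⟩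

theorem MonotoneColorable.of_sdiff (ht : StrictMonoOrAntiOn a t)
    (h : MonotoneColorable a (s \ t) m) : MonotoneColorable a s (m + 1) := by
  classical
  obtain ⟨c, hlt, hc⟩ := h
  refine ⟨fun i => if i ∈ t then 0 else c i + 1, fun i hi => ?_, ?_⟩
  · dsimp only
    split_ifs with hit
    · omega
    · exact Nat.succ_lt_succ (hlt i ⟨hi, hit⟩)
  · rintro (_ | j)
    · refine ht.mono fun i ⟨_, hi⟩ => ?_
      by_contra hit
      simp [hit] at hi
    · refine (hc j).mono fun i ⟨hs, hi⟩ => ?_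
      dsimp only at hi
      split_ifs at hi with hit
      exact ⟨⟨hs, hit⟩, by omega⟩

theorem MonotoneColorable.exists_fin (h : MonotoneColorable a Set.univ m) :
    ∃ c : ι → Fin m, ∀ j, StrictMonoOrAntiOn a {i | c i = j} :=
  let ⟨c, hlt, hc⟩ := h
  ⟨fun i => ⟨c i, hlt i trivial⟩, fun j => (hc j).mono fun _ hi => ⟨trivial, congrArg Fin.val hi⟩⟩

end

section

variable {ι β : Type*} [LinearOrder ι] [LinearOrder β]

open Classical in
noncomputable def incChainLen (a : ι → β) (S : Finset ι) (i : ι) : ℕ :=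
  (S.powerset.filter fun U : Finset ι => IsGreatest (U : Set ι) i ∧ StrictMonoOn a (U : Set ι)).sup
    card

variable {a : ι → β} {S U : Finset ι} {i j : ι}

theorem card_le_incChainLen (hUS : U ⊆ S) (hU : IsGreatest (U : Set ι) i)
    (hmono : StrictMonoOn a (U : Set ι)) : U.card ≤ incChainLen a S i :=
  le_sup (by simp [hUS, hU, hmono])

theorem one_le_incChainLen (hi : i ∈ S) : 1 ≤ incChainLen a S i := by
  simpa using card_le_incChainLen (a := a) (singleton_subset_iff.2 hi) (by simp) (by simp)

theorem incChainLen_le {k : ℕ} (h : ∀ U ⊆ S, StrictMonoOn a (U : Set ι) → U.card ≤ k) :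
    incChainLen a S i ≤ k :=
  Finset.sup_le fun U hU => by
    simp only [mem_filter, mem_powerset] at hU
    exact h U hU.1 hU.2.2

theorem incChainLen_lt_incChainLen (hj : j ∈ S) (hij : i < j) (haij : a i < a j) :
    incChainLen a S i < incChainLen a S j := by
  refine (Finset.sup_lt_iff (one_le_incChainLen hj)).2 fun U hU => ?_
  simp only [mem_filter, mem_powerset] at hU
  obtain ⟨hUS, hUi, hmono⟩ := hU
  have hjU : j ∉ U := fun h => (hUi.2 h).not_gt hij
  have hUj : ∀ x ∈ (U : Set ι), x ≤ j := fun x hx => (hUi.2 hx).trans hij.le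
  calc U.card < (insert j U).card := by rw [card_insert_of_notMem hjU]; omega
    _ ≤ incChainLen a S j := by
      refine card_le_incChainLen (insert_subset hj hUS) ?_ ?_ <;> rw [coe_insert]
      · exact ⟨Set.mem_insert j _, Set.insert_subset_iff.2 ⟨le_rfl, hUj⟩⟩
      · refine (strictMonoOn_insert_iff_of_forall_le hUj).2 ⟨fun x hx _ => ?_, hmono⟩
        exact (hmono.monotoneOn hx hUi.1 (hUi.2 hx)).trans_lt haij

theorem exists_strictMonoOrAntiOn_lt_card {k : ℕ} (hinj : Set.InjOn a S) (hS : k * k < S.card) :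
    ∃ T ⊆ S, k < T.card ∧ StrictMonoOrAntiOn a T := by
  by_contra! hno
  have hinc : ∀ U ⊆ S, StrictMonoOn a (U : Set ι) → U.card ≤ k :=
    fun U hU h => not_lt.1 fun hk => hno U hU hk (Or.inl h)
  have hdec : ∀ U ⊆ S, StrictMonoOn (toDual ∘ a) (U : Set ι) → U.card ≤ k :=
    fun U hU h => not_lt.1 fun hk => hno U hU hk (Or.inr (strictMonoOn_toDual_comp_iff.1 h))
  let φ : ι → ℕ × ℕ := fun i => (incChainLen a S i, incChainLen (toDual ∘ a) S i)
  have hφ : Set.MapsTo φ S (Icc 1 k ×ˢ Icc 1 k : Finset (ℕ × ℕ)) := fun i hi => by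
    simp only [φ, mem_coe, mem_product, mem_Icc]
    exact ⟨⟨one_le_incChainLen hi, incChainLen_le hinc⟩,
      ⟨one_le_incChainLen hi, incChainLen_le hdec⟩⟩
  have hφinj : Set.InjOn φ S := by
    intro i hi j hj hij
    by_contra hne
    wlog h : i < j generalizing i j with H
    · exact H hj hi hij.symm (Ne.symm hne) (lt_of_le_of_ne (not_lt.1 h) (Ne.symm hne))
    rcases lt_or_gt_of_ne (hinj.ne hi hj hne) with hlt | hlt
    · exact (incChainLen_lt_incChainLen hj h hlt).ne (congrArg Prod.fst hij)
    · exact (incChainLen_lt_incChainLen (a := toDual ∘ a) hj h hlt).ne (congrArg Prod.snd hij)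
  have := card_le_card_of_injOn φ hφ hφinj
  simp only [card_product, Nat.card_Icc, add_tsub_cancel_right] at this
  omega

theorem MonotoneColorable.of_lt_card {k m : ℕ} (hinj : Set.InjOn a S) (hS : k * k < S.card)
    (h : ∀ S' ⊆ S, S'.card + (k + 1) ≤ S.card → MonotoneColorable a S' m) :
    MonotoneColorable a S (m + 1) := by
  obtain ⟨T, hTS, hkT, hT⟩ := exists_strictMonoOrAntiOn_lt_card hinj hS
  have hcard : (S \ T).card + (k + 1) ≤ S.card := by
    rw [card_sdiff_of_subset hTS]
    have := card_le_card hTS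
    omega
  have hrest := h (S \ T) sdiff_subset hcard
  rw [coe_sdiff] at hrest
  exact hrest.of_sdiff hT

theorem monotoneColorable_two_mul (k : ℕ) (hinj : Set.InjOn a S) (hS : S.card ≤ k * k) :
    MonotoneColorable a S (2 * k) := by
  induction k generalizing S with
  | zero =>
    obtain rfl : S = ∅ := card_eq_zero.1 (by omega)
    rw [coe_empty]
    exact monotoneColorable_empty
  | succ k ih =>
    have hsq : (k + 1) * (k + 1) = k * k + 2 * k + 1 := by ring
    by_cases h0 : S.card ≤ k * k
    · exact (ih hinj h0).mono (by omega)
    show MonotoneColorable a S (2 * k + 1 + 1)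
    refine MonotoneColorable.of_lt_card (k := k) hinj (by omega) fun S' hS' hcard' => ?_
    have hinj' := hinj.mono (coe_subset.2 hS')
    by_cases h1 : S'.card ≤ k * k
    · exact (ih hinj' h1).mono (by omega)
    exact MonotoneColorable.of_lt_card (k := k) hinj' (by omega) fun S'' hS'' hcard'' =>
      ih (hinj'.mono (coe_subset.2 hS'')) (by omega)

end

theorem partition_two_sqrt_monotone (n : ℕ) (a : Fin n → ℝ)
    (ha : Function.Injective a) :
    ∃ (m : ℕ) (c : Fin n → Fin m), m ≤ 2 * ⌈Real.sqrt n⌉₊ ∧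
      ∀ j : Fin m, StrictMonoOn a {i | c i = j} ∨ StrictAntiOn a {i | c i = j} := by
  set k := ⌈Real.sqrt n⌉₊
  have hn : n ≤ k * k := by
    have := (Real.sqrt_le_left (Nat.cast_nonneg k)).1 (Nat.le_ceil _)
    rw [← sq]
    exact_mod_cast this
  have hcol := monotoneColorable_two_mul k ha.injOn (S := univ) (by simpa using hn)
  rw [coe_univ] at hcol
  obtain ⟨c, hc⟩ := hcol.exists_fin
  exact ⟨2 * k, c, le_rfl, hc⟩
end

section
/- If the longest strictly increasing subsequence of a sequence a : Fin n → ℝ with distinct values has length k, then the index set Fin n can be partitioned into k sets each of which is a strictly decreasing subsequence. -/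
/-!
Label each index `i` by the length of the longest increasing subsequence ending at `i`. These
labels lie in `1, …, k`, and whenever `i < j` and `a i < a j`, appending `j` to a longest
increasing subsequence ending at `i` shows that the label of `j` exceeds that of `i`. Hence two
indices with the same label carry distinct values in decreasing order: the label classes are the
required `k` decreasing subsequences.
-/

namespace Fin

variable {α : Type*} [LinearOrder α] {n : ℕ} (a : Fin n → α)

def increasingEndLengths (i : Fin n) : Set ℕ :=
  {m | ∃ g : Fin (m + 1) → Fin n, StrictMono g ∧ StrictMono (a ∘ g) ∧ g (last m) = i}

/-- One less than the length of a longest increasing subsequence of `a` ending at `i`. -/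
noncomputable def lisEndingAt (i : Fin n) : ℕ :=
  sSup (increasingEndLengths a i)

variable {a}

lemma zero_mem_increasingEndLengths (i : Fin n) : 0 ∈ increasingEndLengths a i :=
  ⟨fun _ => i, Subsingleton.strictMono (α := Fin 1) _,
    Subsingleton.strictMono (α := Fin 1) _, rfl⟩

lemma bddAbove_increasingEndLengths (i : Fin n) : BddAbove (increasingEndLengths a i) :=
  ⟨n, fun _ ⟨g, hg, _⟩ => Nat.le_of_succ_le (le_of_injective g hg.injective)⟩

lemma lisEndingAt_mem (i : Fin n) : lisEndingAt a i ∈ increasingEndLengths a i :=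
  Nat.sSup_mem ⟨0, zero_mem_increasingEndLengths i⟩ (bddAbove_increasingEndLengths i)

lemma succ_mem_increasingEndLengths {i j : Fin n} {m : ℕ} (hij : i < j) (haij : a i < a j)
    (hm : m ∈ increasingEndLengths a i) : m + 1 ∈ increasingEndLengths a j := by
  obtain ⟨g, hg, hag, rfl⟩ := hm
  refine ⟨snoc g j, ?_, ?_, snoc_last _ _⟩
  · simpa only [insertNth_last'] using strictMono_insertNth_last hg j hij
  · rw [comp_snoc]
    simpa only [insertNth_last'] using strictMono_insertNth_last hag (a j) haij

lemma lisEndingAt_lt_lisEndingAt {i j : Fin n} (hij : i < j) (haij : a i < a j) :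
    lisEndingAt a i < lisEndingAt a j :=
  le_csSup (bddAbove_increasingEndLengths j)
    (succ_mem_increasingEndLengths hij haij (lisEndingAt_mem i))

lemma lisEndingAt_lt {k : ℕ}
    (hk : k ∈ upperBounds {m | ∃ g : Fin m → Fin n, StrictMono g ∧ StrictMono (a ∘ g)})
    (i : Fin n) : lisEndingAt a i < k :=
  let ⟨g, hg, hag, _⟩ := lisEndingAt_mem (a := a) i
  hk ⟨g, hg, hag⟩

lemma strictAntiOn_lisEndingAt_fiber (ha : Function.Injective a) (l : ℕ) :
    StrictAntiOn a {i | lisEndingAt a i = l} := by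
  intro i hi j hj hij
  refine (ha.ne hij.ne).lt_or_gt.resolve_left fun haij => ?_
  exact (lisEndingAt_lt_lisEndingAt hij haij).ne (hi.trans hj.symm)

end Fin

theorem partition_into_LIS_many_decreasing (n k : ℕ) (a : Fin n → ℝ)
    (ha : Function.Injective a)
    (hk : IsGreatest {m : ℕ | ∃ g : Fin m → Fin n, StrictMono g ∧ StrictMono (a ∘ g)} k) :
    ∃ c : Fin n → Fin k, ∀ j : Fin k, StrictAntiOn a {i | c i = j} :=
  ⟨fun i => ⟨Fin.lisEndingAt a i, Fin.lisEndingAt_lt hk.2 i⟩, fun j => by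
    simpa only [Fin.ext_iff] using Fin.strictAntiOn_lisEndingAt_fiber ha j⟩
end

section
/- For reals 1 < λ < 2, ε' = λ − 1, integers k ≥ 1, j ≥ 1, h ≥ 1: k·λ^(2j+6h−2) − ⌊ε'·⌈k·λ^(2j)⌉⌋ + 2 > k·λ^(2j+6h−3). -/
theorem dynamic_amortisation_bound (lam ε' : ℝ) (k j h : ℕ)
    (h1 : 1 < lam) (h2 : lam < 2) (he : ε' = lam - 1)
    (hk : 1 ≤ k) (hj : 1 ≤ j) (hh : 1 ≤ h) :
    (k : ℝ) * lam ^ (2 * j + 6 * h - 2) -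
      ((⌊ε' * (⌈(k : ℝ) * lam ^ (2 * j)⌉ : ℝ)⌋ : ℝ)) + 2 >
      (k : ℝ) * lam ^ (2 * j + 6 * h - 3) := by
  subst he
  set a := (k : ℝ) * lam ^ (2 * j) with ha
  have hfloor : ((⌊(lam - 1) * (⌈a⌉ : ℝ)⌋ : ℝ)) ≤ (lam - 1) * (⌈a⌉ : ℝ) := Int.floor_le _
  have hceil : (⌈a⌉ : ℝ) < a + 1 := Int.ceil_lt_add_one a
  have hε : 0 < lam - 1 := by linarith
  have h2e : (lam - 1) * (⌈a⌉ : ℝ) < (lam - 1) * (a + 1) := by nlinarith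
  have hm : 2 * j + 6 * h - 2 = (2 * j + 6 * h - 3) + 1 := by omega
  rw [hm]
  set m := 2 * j + 6 * h - 3 with hmdef
  have hmge : 2 * j ≤ m := by omega
  have hpow : lam ^ (2 * j) ≤ lam ^ m := pow_le_pow_right₀ (le_of_lt h1) hmge
  have hk' : (1 : ℝ) ≤ (k : ℝ) := by exact_mod_cast hk
  have key : (k : ℝ) * lam ^ (m + 1) - (k : ℝ) * lam ^ m ≥ (lam - 1) * a := by
    rw [pow_succ]
    have hkpos : (0 : ℝ) ≤ (k : ℝ) * (lam - 1) := by positivity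
    nlinarith [mul_le_mul_of_nonneg_left hpow hkpos]
  linarith
end

section
/- Greedy shift lemma for exact covers: Let A be a sequence of distinct reals and k ≥ 2. Suppose (a,c) is the shortest prefix of A containing an increasing subsequence of length k, (b,c) its shortest suffix containing such a subsequence, X = (x₁,...,x_k) the lexicographically (by positions) minimal increasing subsequence of length k in (b,c), and after cutting at b, let X' = (x'₁,...,x'_k) be defined analogously for the next iteration. Then for all 1 ≤ i < k, position(x'_i) ≥ position(x_{i+1}). -/
/-- `g` is an increasing subsequence of length `k` of `A` lying inside the
index interval `[p, q]`. -/
def IsChainIn (N k : ℕ) (A : Fin N → ℝ) (p q : Fin N) (g : Fin k → Fin N) : Prop :=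
  StrictMono g ∧ StrictMono (A ∘ g) ∧ ∀ m, p ≤ g m ∧ g m ≤ q

/-- The interval `[p, q]` contains an increasing subsequence of length `k`. -/
def HasChain (N k : ℕ) (A : Fin N → ℝ) (p q : Fin N) : Prop :=
  ∃ g : Fin k → Fin N, IsChainIn N k A p q g

/-- A function on `Fin k` is strictly monotone if adjacent values increase. -/
lemma adjStrictMono {α : Type*} [Preorder α] {k : ℕ} {f : Fin k → α}
    (h : ∀ i (hi : i + 1 < k), f ⟨i, Nat.lt_of_succ_lt hi⟩ < f ⟨i + 1, hi⟩) :
    StrictMono f := by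
  have key : ∀ n (a b : Fin k), (b : ℕ) = (a : ℕ) + n + 1 → f a < f b := by
    intro n
    induction n with
    | zero =>
        intro a b hb
        have hb' : (a : ℕ) + 1 < k := by have := b.isLt; omega
        have ea : (⟨(a : ℕ), Nat.lt_of_succ_lt hb'⟩ : Fin k) = a := Fin.ext rfl
        have eb : (⟨(a : ℕ) + 1, hb'⟩ : Fin k) = b :=
          Fin.ext (show (a : ℕ) + 1 = (b : ℕ) by omega)
        rw [← ea, ← eb]
        exact h _ hb'
    | succ n ih =>
        intro a b hb
        have hm : (a : ℕ) + n + 1 < k := by have := b.isLt; omega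
        have h1 : f a < f ⟨(a : ℕ) + n + 1, hm⟩ := ih a _ rfl
        have hb2 : (a : ℕ) + n + 1 + 1 < k := by have := b.isLt; omega
        have eb : (⟨(a : ℕ) + n + 1 + 1, hb2⟩ : Fin k) = b :=
          Fin.ext (show (a : ℕ) + n + 1 + 1 = (b : ℕ) by omega)
        have h2 : f ⟨(a : ℕ) + n + 1, hm⟩ < f b := by
          rw [← eb]; exact h _ hb2
        exact h1.trans h2
  intro a b hab
  exact key ((b : ℕ) - (a : ℕ) - 1) a b (by have := (Fin.lt_def.mp hab); omega)

theorem greedy_shift_exact (N k : ℕ) (hk : 2 ≤ k) (A : Fin N → ℝ)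
    (hA : Function.Injective A)
    (a b c : Fin N)
    -- (a,c) is the shortest prefix containing a chain of length k
    (hpc : HasChain N k A a c)
    (hpcmin : ∀ c' : Fin N, c' < c → ¬ HasChain N k A a c')
    -- (b,c) is the shortest suffix of (a,c) containing a chain of length k
    (hab : a ≤ b)
    (hsb : HasChain N k A b c)
    (hsbmax : ∀ b'' : Fin N, b < b'' → ¬ HasChain N k A b'' c)
    -- X is the lexicographically minimal chain of length k in (b,c)
    (X : Fin k → Fin N) (hX : IsChainIn N k A b c X)
    (hXmin : ∀ Y : Fin k → Fin N, IsChainIn N k A b c Y →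
      ∀ m : Fin k, (∀ l, l < m → Y l = X l) → X m ≤ Y m)
    -- the next prefix starts at b+1 and is (a₂,d); (b',d) is its shortest suffix
    (a₂ d b' : Fin N) (ha₂ : (a₂ : ℕ) = (b : ℕ) + 1)
    (hpd : HasChain N k A a₂ d)
    (hpdmin : ∀ d' : Fin N, d' < d → ¬ HasChain N k A a₂ d')
    (ha₂b' : a₂ ≤ b')
    (hsb' : HasChain N k A b' d)
    (hsb'max : ∀ b'' : Fin N, b' < b'' → ¬ HasChain N k A b'' d)
    -- X' is the lexicographically minimal chain of length k in (b',d)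
    (X' : Fin k → Fin N) (hX' : IsChainIn N k A b' d X')
    (hX'min : ∀ Y : Fin k → Fin N, IsChainIn N k A b' d Y →
      ∀ m : Fin k, (∀ l, l < m → Y l = X' l) → X' m ≤ Y m) :
    ∀ (i : ℕ) (h : i + 1 < k), X ⟨i + 1, h⟩ ≤ X' ⟨i, by omega⟩ := by
  classical
  obtain ⟨hXmono, hXval, hXbd⟩ := hX
  obtain ⟨hX'mono, hX'val, hX'bd⟩ := hX'
  -- convenient monotonicity facts
  have hXle : ∀ (i j : ℕ) (hi : i < k) (hj : j < k), i ≤ j → X ⟨i, hi⟩ ≤ X ⟨j, hj⟩ :=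
    fun i j hi hj hij => hXmono.monotone (Fin.mk_le_mk.mpr hij)
  have hXlt : ∀ (i j : ℕ) (hi : i < k) (hj : j < k), i < j → X ⟨i, hi⟩ < X ⟨j, hj⟩ :=
    fun i j hi hj hij => hXmono (Fin.mk_lt_mk.mpr hij)
  have hX'le : ∀ (i j : ℕ) (hi : i < k) (hj : j < k), i ≤ j → X' ⟨i, hi⟩ ≤ X' ⟨j, hj⟩ :=
    fun i j hi hj hij => hX'mono.monotone (Fin.mk_le_mk.mpr hij)
  have hX'lt : ∀ (i j : ℕ) (hi : i < k) (hj : j < k), i < j → X' ⟨i, hi⟩ < X' ⟨j, hj⟩ :=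
    fun i j hi hj hij => hX'mono (Fin.mk_lt_mk.mpr hij)
  have hXvlt : ∀ (i j : ℕ) (hi : i < k) (hj : j < k), i < j →
      A (X ⟨i, hi⟩) < A (X ⟨j, hj⟩) :=
    fun i j hi hj hij => hXval (Fin.mk_lt_mk.mpr hij)
  have hX'vlt : ∀ (i j : ℕ) (hi : i < k) (hj : j < k), i < j →
      A (X' ⟨i, hi⟩) < A (X' ⟨j, hj⟩) :=
    fun i j hi hj hij => hX'val (Fin.mk_lt_mk.mpr hij)
  -- b < b'
  have hbb' : (b : ℕ) < (b' : ℕ) := by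
    have := Fin.le_def.mp ha₂b'
    omega
  have hbb'F : b < b' := Fin.lt_def.mpr hbb'
  -- X starts at most at b
  have hx0b : ∀ h0 : 0 < k, X ⟨0, h0⟩ ≤ b := by
    intro h0
    by_contra hgt
    push_neg at hgt
    refine hsbmax (X ⟨0, h0⟩) hgt ⟨X, hXmono, hXval, fun m => ⟨?_, (hXbd m).2⟩⟩
    exact hXmono.monotone (by simp [Fin.le_def])
  by_contra hcon
  push_neg at hcon
  -- the set of counterexamples
  set P : ℕ → Prop := fun i => ∃ hi : i + 1 < k, X' ⟨i, Nat.lt_of_succ_lt hi⟩ < X ⟨i + 1, hi⟩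
    with hPdef
  have hex : ∃ i, P i := by
    obtain ⟨i0, hi0, hlt0⟩ := hcon
    exact ⟨i0, hi0, hlt0⟩
  obtain ⟨t, hPt, htmin⟩ : ∃ t, P t ∧ ∀ m, m < t → ¬ P m :=
    ⟨Nat.find hex, Nat.find_spec hex, fun m hm => Nat.find_min hex hm⟩
  obtain ⟨ht1, hxt⟩ := hPt
  have htk : t ≤ k - 2 := by omega
  obtain ⟨s, hPs, hts, hsmax⟩ :
      ∃ s, P s ∧ t ≤ s ∧ ∀ m, s < m → m ≤ k - 2 → ¬ P m := by
    refine ⟨Nat.findGreatest P (k - 2), Nat.findGreatest_spec htk ⟨ht1, hxt⟩, ?_, ?_⟩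
    · exact Nat.le_findGreatest htk ⟨ht1, hxt⟩
    · intro m h1 h2
      exact Nat.findGreatest_is_greatest h1 h2
  obtain ⟨hs1, hxs⟩ := hPs
  -- (‡) at t : ¬ (A (X' t) < A (X (t+1)))  (else chain in [b', c] beats hsbmax)
  have hval_t : A (X ⟨t + 1, ht1⟩) ≤ A (X' ⟨t, Nat.lt_of_succ_lt ht1⟩) := by
    by_contra h'
    push_neg at h'
    set g1 : Fin k → Fin N := fun j => if (j : ℕ) ≤ t then X' j else X j with hg1def
    have hg1 : ∀ (j : Fin k), (j : ℕ) ≤ t → g1 j = X' j := by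
      intro j hj; simp [hg1def, hj]
    have hg1' : ∀ (j : Fin k), ¬ ((j : ℕ) ≤ t) → g1 j = X j := by
      intro j hj; simp [hg1def, hj]
    have hmono1 : StrictMono g1 := by
      apply adjStrictMono
      intro i hi
      by_cases h1 : i + 1 ≤ t
      · rw [hg1 ⟨i, Nat.lt_of_succ_lt hi⟩ (show i ≤ t by omega), hg1 ⟨i + 1, hi⟩ h1]
        exact hX'lt i (i + 1) _ _ (by omega)
      · by_cases h2 : i ≤ t
        · have hit : i = t := by omega
          rw [hg1 ⟨i, Nat.lt_of_succ_lt hi⟩ h2, hg1' ⟨i + 1, hi⟩ h1]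
          subst hit
          exact hxt
        · rw [hg1' ⟨i, Nat.lt_of_succ_lt hi⟩ h2, hg1' ⟨i + 1, hi⟩ h1]
          exact hXlt i (i + 1) _ _ (by omega)
    have hval1 : StrictMono (A ∘ g1) := by
      apply adjStrictMono
      intro i hi
      show A (g1 ⟨i, Nat.lt_of_succ_lt hi⟩) < A (g1 ⟨i + 1, hi⟩)
      by_cases h1 : i + 1 ≤ t
      · rw [hg1 ⟨i, Nat.lt_of_succ_lt hi⟩ (show i ≤ t by omega), hg1 ⟨i + 1, hi⟩ h1]
        exact hX'vlt i (i + 1) _ _ (by omega)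
      · by_cases h2 : i ≤ t
        · have hit : i = t := by omega
          rw [hg1 ⟨i, Nat.lt_of_succ_lt hi⟩ h2, hg1' ⟨i + 1, hi⟩ h1]
          subst hit
          exact h'
        · rw [hg1' ⟨i, Nat.lt_of_succ_lt hi⟩ h2, hg1' ⟨i + 1, hi⟩ h1]
          exact hXvlt i (i + 1) _ _ (by omega)
    refine hsbmax b' hbb'F ⟨g1, hmono1, hval1, fun m => ?_⟩
    by_cases hm : (m : ℕ) ≤ t
    · rw [hg1 _ hm]
      constructor
      · exact (hX'bd m).1
      · calc X' m ≤ X' ⟨t, Nat.lt_of_succ_lt ht1⟩ := hX'mono.monotone (Fin.le_def.mpr hm)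
          _ ≤ X ⟨t + 1, ht1⟩ := le_of_lt hxt
          _ ≤ c := (hXbd _).2
    · rw [hg1' _ hm]
      constructor
      · calc b' ≤ X' ⟨t, Nat.lt_of_succ_lt ht1⟩ := (hX'bd _).1
          _ ≤ X ⟨t + 1, ht1⟩ := le_of_lt hxt
          _ ≤ X m := hXmono.monotone (Fin.le_def.mpr (by simp; omega))
      · exact (hXbd m).2
  -- (†) : if x_{l+1} < x'_l, then ¬ (A (x_{l+1}) < A (x'_l))
  have hdag : ∀ (l : ℕ) (hl : l + 1 < k),
      X ⟨l + 1, hl⟩ < X' ⟨l, Nat.lt_of_succ_lt hl⟩ →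
      ¬ (A (X ⟨l + 1, hl⟩) < A (X' ⟨l, Nat.lt_of_succ_lt hl⟩)) := by
    intro l hl hplt hvlt
    have hk2 : k - 2 < k := by omega
    have hk1 : k - 1 < k := by omega
    set g2 : Fin k → Fin N := fun j =>
      if h : (j : ℕ) ≤ l then X ⟨(j : ℕ) + 1, by omega⟩
      else X' ⟨(j : ℕ) - 1, Nat.lt_of_le_of_lt (Nat.sub_le _ _) j.isLt⟩ with hg2def
    have hg2 : ∀ (j : Fin k) (hj : (j : ℕ) ≤ l), g2 j = X ⟨(j : ℕ) + 1, by omega⟩ := by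
      intro j hj; simp [hg2def, hj]
    have hg2' : ∀ (j : Fin k), ¬ ((j : ℕ) ≤ l) →
        g2 j = X' ⟨(j : ℕ) - 1, Nat.lt_of_le_of_lt (Nat.sub_le _ _) j.isLt⟩ := by
      intro j hj; simp [hg2def, hj]
    have hmono2 : StrictMono g2 := by
      apply adjStrictMono
      intro i hi
      by_cases h1 : i + 1 ≤ l
      · rw [hg2 ⟨i, Nat.lt_of_succ_lt hi⟩ (show i ≤ l by omega), hg2 ⟨i + 1, hi⟩ h1]
        exact hXlt _ _ _ _ (show i + 1 < i + 1 + 1 by omega)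
      · by_cases h2 : i ≤ l
        · have hil : i = l := by omega
          rw [hg2 ⟨i, Nat.lt_of_succ_lt hi⟩ h2, hg2' ⟨i + 1, hi⟩ h1]
          subst hil
          exact lt_of_lt_of_le hplt (le_of_eq (by congr 1))
        · rw [hg2' ⟨i, Nat.lt_of_succ_lt hi⟩ h2, hg2' ⟨i + 1, hi⟩ h1]
          exact hX'lt _ _ _ _ (show i - 1 < i + 1 - 1 by omega)
    have hval2 : StrictMono (A ∘ g2) := by
      apply adjStrictMono
      intro i hi
      show A (g2 ⟨i, Nat.lt_of_succ_lt hi⟩) < A (g2 ⟨i + 1, hi⟩)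
      by_cases h1 : i + 1 ≤ l
      · rw [hg2 ⟨i, Nat.lt_of_succ_lt hi⟩ (show i ≤ l by omega), hg2 ⟨i + 1, hi⟩ h1]
        exact hXvlt _ _ _ _ (show i + 1 < i + 1 + 1 by omega)
      · by_cases h2 : i ≤ l
        · have hil : i = l := by omega
          rw [hg2 ⟨i, Nat.lt_of_succ_lt hi⟩ h2, hg2' ⟨i + 1, hi⟩ h1]
          subst hil
          exact lt_of_lt_of_le hvlt (le_of_eq (by congr 2))
        · rw [hg2' ⟨i, Nat.lt_of_succ_lt hi⟩ h2, hg2' ⟨i + 1, hi⟩ h1]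
          exact hX'vlt _ _ _ _ (show i - 1 < i + 1 - 1 by omega)
    have hend : X' ⟨k - 2, hk2⟩ < d := by
      calc X' ⟨k - 2, hk2⟩ < X' ⟨k - 1, hk1⟩ := hX'lt _ _ _ _ (by omega)
        _ ≤ d := (hX'bd _).2
    refine hpdmin (X' ⟨k - 2, hk2⟩) hend ⟨g2, hmono2, hval2, fun m => ?_⟩
    by_cases hm : (m : ℕ) ≤ l
    · rw [hg2 _ hm]
      constructor
      · -- a₂ ≤ X ⟨m+1⟩ since X ⟨m+1⟩ > X 0 ≥ b and a₂ = b+1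
        have h1 : X ⟨0, by omega⟩ < X ⟨(m : ℕ) + 1, by omega⟩ := hXlt _ _ _ _ (by omega)
        have h2 : b ≤ X ⟨0, by omega⟩ := (hXbd _).1
        rw [Fin.lt_def] at h1
        rw [Fin.le_def] at h2
        rw [Fin.le_def, ha₂]
        omega
      · calc X ⟨(m : ℕ) + 1, by omega⟩ ≤ X ⟨l + 1, hl⟩ := hXle _ _ _ _ (by omega)
          _ ≤ X' ⟨l, Nat.lt_of_succ_lt hl⟩ := le_of_lt hplt
          _ ≤ X' ⟨k - 2, hk2⟩ := hX'le _ _ _ _ (by omega)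
    · rw [hg2' _ hm]
      constructor
      · exact le_trans ha₂b' (hX'bd _).1
      · exact hX'le _ _ _ _ (by have := m.isLt; omega)
  -- value at junction 1 : A (x_t) < A (x'_t)
  have hvt : A (X ⟨t, Nat.lt_of_succ_lt ht1⟩) < A (X' ⟨t, Nat.lt_of_succ_lt ht1⟩) :=
    lt_of_lt_of_le (hXvlt t (t + 1) _ _ (by omega)) hval_t
  -- position at junction 1 : x_t < x'_t
  have hpt : X ⟨t, Nat.lt_of_succ_lt ht1⟩ < X' ⟨t, Nat.lt_of_succ_lt ht1⟩ := by
    rcases Nat.eq_zero_or_pos t with h0 | h0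
    · calc X ⟨t, Nat.lt_of_succ_lt ht1⟩ = X ⟨0, by omega⟩ := by congr 1; exact Fin.ext h0
        _ ≤ b := hx0b _
        _ < b' := hbb'F
        _ ≤ X' ⟨t, Nat.lt_of_succ_lt ht1⟩ := (hX'bd _).1
    · have hr : ¬ P (t - 1) := htmin (t - 1) (by omega)
      have hle : X ⟨t, Nat.lt_of_succ_lt ht1⟩ ≤ X' ⟨t - 1, by omega⟩ := by
        by_contra hgt
        push_neg at hgt
        refine hr ⟨show t - 1 + 1 < k by omega, ?_⟩
        have e1 : (⟨t - 1 + 1, show t - 1 + 1 < k by omega⟩ : Fin k)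
            = ⟨t, Nat.lt_of_succ_lt ht1⟩ := Fin.ext (show t - 1 + 1 = t by omega)
        rw [e1]
        exact lt_of_le_of_lt (le_of_eq (by congr 1)) hgt
      calc X ⟨t, Nat.lt_of_succ_lt ht1⟩ ≤ X' ⟨t - 1, by omega⟩ := hle
        _ < X' ⟨t, Nat.lt_of_succ_lt ht1⟩ := hX'lt _ _ _ _ (by omega)
  -- value at junction 2 : A (x'_s) < A (x_{s+2}) whenever s+2 < k
  have hjun2 : ∀ hs2 : s + 2 < k,
      A (X' ⟨s, by omega⟩) < A (X ⟨s + 2, hs2⟩) := by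
    intro hs2
    have hnos1 : ¬ P (s + 1) := hsmax (s + 1) (by omega) (by omega)
    have hge : X ⟨s + 2, hs2⟩ ≤ X' ⟨s + 1, by omega⟩ := by
      by_contra hgt
      push_neg at hgt
      refine hnos1 ⟨show s + 1 + 1 < k by omega, ?_⟩
      exact lt_of_lt_of_le hgt (le_of_eq (by congr 1))
    rcases lt_or_eq_of_le hge with hgt | heq
    · have hvle : ¬ (A (X ⟨s + 2, hs2⟩) < A (X' ⟨s + 1, by omega⟩)) :=
        hdag (s + 1) hs2 hgt
      push_neg at hvle
      exact lt_of_lt_of_le (hX'vlt s (s + 1) _ _ (by omega)) hvle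
    · have h2 := hX'vlt s (s + 1) (by omega) (by omega) (by omega)
      rw [← heq] at h2
      exact h2
  -- the splice Y contradicting lexicographic minimality of X at position t+1
  set Y : Fin k → Fin N := fun j =>
    if (j : ℕ) ≤ t then X j
    else if (j : ℕ) ≤ s + 1 then X' ⟨(j : ℕ) - 1, Nat.lt_of_le_of_lt (Nat.sub_le _ _) j.isLt⟩
    else X j with hYdef
  have hY1 : ∀ (j : Fin k), (j : ℕ) ≤ t → Y j = X j := by
    intro j hj; simp [hYdef, hj]
  have hY2 : ∀ (j : Fin k), ¬ ((j : ℕ) ≤ t) → (j : ℕ) ≤ s + 1 →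
      Y j = X' ⟨(j : ℕ) - 1, Nat.lt_of_le_of_lt (Nat.sub_le _ _) j.isLt⟩ := by
    intro j hj1 hj2; simp [hYdef, hj1, hj2]
  have hY3 : ∀ (j : Fin k), ¬ ((j : ℕ) ≤ s + 1) → Y j = X j := by
    intro j hj
    have h' : ¬ ((j : ℕ) ≤ t) := by omega
    simp [hYdef, h', hj]
  have hmonoY : StrictMono Y := by
    apply adjStrictMono
    intro i hi
    by_cases h1 : i + 1 ≤ t
    · rw [hY1 ⟨i, Nat.lt_of_succ_lt hi⟩ (show i ≤ t by omega), hY1 ⟨i + 1, hi⟩ h1]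
      exact hXlt _ _ _ _ (by omega)
    · by_cases h2 : i ≤ t
      · -- i = t : junction 1
        have hit : i = t := by omega
        rw [hY1 ⟨i, Nat.lt_of_succ_lt hi⟩ h2,
          hY2 ⟨i + 1, hi⟩ h1 (show i + 1 ≤ s + 1 by omega)]
        have e1 : (⟨i + 1 - 1, Nat.lt_of_le_of_lt (Nat.sub_le _ _)
            (Fin.isLt (⟨i + 1, hi⟩ : Fin k))⟩ : Fin k) = ⟨i, Nat.lt_of_succ_lt hi⟩ :=
          Fin.ext (show i + 1 - 1 = i by omega)
        rw [e1]
        subst hit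
        exact hpt
      · by_cases h3 : i + 1 ≤ s + 1
        · -- middle segment
          rw [hY2 ⟨i, Nat.lt_of_succ_lt hi⟩ h2 (show i ≤ s + 1 by omega),
            hY2 ⟨i + 1, hi⟩ (show ¬ (i + 1 ≤ t) by omega) h3]
          exact hX'lt _ _ _ _ (show i - 1 < i + 1 - 1 by omega)
        · by_cases h4 : i ≤ s + 1
          · -- i = s + 1 : junction 2
            have his : i = s + 1 := by omega
            rw [hY2 ⟨i, Nat.lt_of_succ_lt hi⟩ h2 h4, hY3 ⟨i + 1, hi⟩ h3]
            have e1 : (⟨i - 1, Nat.lt_of_le_of_lt (Nat.sub_le _ _)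
                (Fin.isLt (⟨i, Nat.lt_of_succ_lt hi⟩ : Fin k))⟩ : Fin k)
                = ⟨s, by omega⟩ := Fin.ext (show i - 1 = s by omega)
            rw [e1]
            calc X' ⟨s, by omega⟩ < X ⟨s + 1, by omega⟩ := hxs
              _ ≤ X ⟨i + 1, hi⟩ := hXle _ _ _ _ (by omega)
          · -- tail segment
            rw [hY3 ⟨i, Nat.lt_of_succ_lt hi⟩ h4,
              hY3 ⟨i + 1, hi⟩ (show ¬ (i + 1 ≤ s + 1) by omega)]
            exact hXlt _ _ _ _ (by omega)
  have hvalY : StrictMono (A ∘ Y) := by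
    apply adjStrictMono
    intro i hi
    show A (Y ⟨i, Nat.lt_of_succ_lt hi⟩) < A (Y ⟨i + 1, hi⟩)
    by_cases h1 : i + 1 ≤ t
    · rw [hY1 ⟨i, Nat.lt_of_succ_lt hi⟩ (show i ≤ t by omega), hY1 ⟨i + 1, hi⟩ h1]
      exact hXvlt _ _ _ _ (by omega)
    · by_cases h2 : i ≤ t
      · have hit : i = t := by omega
        rw [hY1 ⟨i, Nat.lt_of_succ_lt hi⟩ h2,
          hY2 ⟨i + 1, hi⟩ h1 (show i + 1 ≤ s + 1 by omega)]
        have e1 : (⟨i + 1 - 1, Nat.lt_of_le_of_lt (Nat.sub_le _ _)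
            (Fin.isLt (⟨i + 1, hi⟩ : Fin k))⟩ : Fin k) = ⟨i, Nat.lt_of_succ_lt hi⟩ :=
          Fin.ext (show i + 1 - 1 = i by omega)
        rw [e1]
        subst hit
        exact hvt
      · by_cases h3 : i + 1 ≤ s + 1
        · rw [hY2 ⟨i, Nat.lt_of_succ_lt hi⟩ h2 (show i ≤ s + 1 by omega),
            hY2 ⟨i + 1, hi⟩ (show ¬ (i + 1 ≤ t) by omega) h3]
          exact hX'vlt _ _ _ _ (show i - 1 < i + 1 - 1 by omega)
        · by_cases h4 : i ≤ s + 1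
          · have his : i = s + 1 := by omega
            rw [hY2 ⟨i, Nat.lt_of_succ_lt hi⟩ h2 h4, hY3 ⟨i + 1, hi⟩ h3]
            have hs2 : s + 2 < k := by omega
            have e1 : (⟨i - 1, Nat.lt_of_le_of_lt (Nat.sub_le _ _)
                (Fin.isLt (⟨i, Nat.lt_of_succ_lt hi⟩ : Fin k))⟩ : Fin k)
                = ⟨s, by omega⟩ := Fin.ext (show i - 1 = s by omega)
            rw [e1]
            calc A (X' ⟨s, by omega⟩) < A (X ⟨s + 2, hs2⟩) := hjun2 hs2
              _ ≤ A (X ⟨i + 1, hi⟩) := le_of_eq (by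
                  congr 2; exact Fin.ext (show s + 2 = i + 1 by omega))
          · rw [hY3 ⟨i, Nat.lt_of_succ_lt hi⟩ h4,
              hY3 ⟨i + 1, hi⟩ (show ¬ (i + 1 ≤ s + 1) by omega)]
            exact hXvlt _ _ _ _ (by omega)
  have hbdY : ∀ m, b ≤ Y m ∧ Y m ≤ c := by
    intro m
    by_cases hm1 : (m : ℕ) ≤ t
    · rw [hY1 _ hm1]; exact hXbd m
    · by_cases hm2 : (m : ℕ) ≤ s + 1
      · rw [hY2 _ hm1 hm2]
        constructor
        · exact le_trans (le_of_lt hbb'F) (hX'bd _).1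
        · calc X' ⟨(m : ℕ) - 1, _⟩ ≤ X' ⟨s, by omega⟩ := hX'le _ _ _ _ (by omega)
            _ ≤ X ⟨s + 1, by omega⟩ := le_of_lt hxs
            _ ≤ c := (hXbd _).2
      · rw [hY3 _ hm2]; exact hXbd m
  have hYchain : IsChainIn N k A b c Y := ⟨hmonoY, hvalY, hbdY⟩
  have happ := hXmin Y hYchain ⟨t + 1, ht1⟩ (by
    intro l hl
    have hlt : (l : ℕ) ≤ t := Nat.lt_succ_iff.mp (Fin.lt_def.mp hl)
    exact hY1 l hlt)
  have hYval : Y ⟨t + 1, ht1⟩ = X' ⟨t, Nat.lt_of_succ_lt ht1⟩ := by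
    rw [hY2 ⟨t + 1, ht1⟩ (show ¬ (t + 1 ≤ t) by omega) (show t + 1 ≤ s + 1 by omega)]
    congr 1
  rw [hYval] at happ
  exact hxt.not_ge happ
end

section
/- Greedy shift lemma for approximate covers: Let A be a sequence of distinct reals, k₂ > k₁ ≥ 1, Δ = k₂ − k₁. Let P be the shortest prefix containing an increasing subsequence of length k₂, X = (x₁,...,x_{k₂}) the lexicographically minimal such subsequence in P, and S the shortest suffix of P containing an increasing subsequence of length k₁, with Y = (y₁,...,y_{k₁}) the lexicographically minimal such subsequence in S. Then for all 1 ≤ i ≤ k₁, position(y_i) ≥ position(x_{i+Δ}). -/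
set_option maxHeartbeats 2000000 in
theorem greedy_shift_approx (N k₁ k₂ : ℕ) (hk₁ : 1 ≤ k₁) (hk : k₁ < k₂)
    (A : Fin N → ℝ) (hA : Function.Injective A)
    (a b c : Fin N)
    -- (a,c) is the shortest prefix containing a chain of length k₂
    (hpc : HasChain N k₂ A a c)
    (hpcmin : ∀ c' : Fin N, c' < c → ¬ HasChain N k₂ A a c')
    -- X is the lexicographically minimal chain of length k₂ in (a,c)
    (X : Fin k₂ → Fin N) (hX : IsChainIn N k₂ A a c X)
    (hXmin : ∀ Z : Fin k₂ → Fin N, IsChainIn N k₂ A a c Z →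
      ∀ m : Fin k₂, (∀ l, l < m → Z l = X l) → X m ≤ Z m)
    -- (b,c) is the shortest suffix of (a,c) containing a chain of length k₁
    (hab : a ≤ b)
    (hsb : HasChain N k₁ A b c)
    (hsbmax : ∀ b'' : Fin N, b < b'' → ¬ HasChain N k₁ A b'' c)
    -- Y is the lexicographically minimal chain of length k₁ in (b,c)
    (Y : Fin k₁ → Fin N) (hY : IsChainIn N k₁ A b c Y)
    (hYmin : ∀ Z : Fin k₁ → Fin N, IsChainIn N k₁ A b c Z →
      ∀ m : Fin k₁, (∀ l, l < m → Z l = Y l) → Y m ≤ Z m) :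
    ∀ (i : ℕ) (h : i < k₁), X ⟨i + (k₂ - k₁), by omega⟩ ≤ Y ⟨i, h⟩ := by
  obtain ⟨hXm, hXv, hXmem⟩ := hX
  obtain ⟨hYm, hYv, hYmem⟩ := hY
  intro i
  induction i using Nat.strong_induction_on with
  | _ i IH =>
    intro h
    by_contra hcon
    push_neg at hcon
    rcases Nat.eq_zero_or_pos i with hi0 | hi1
    · -- base case: the tail of X is a length-k₁ chain strictly to the right of b
      subst hi0
      refine hsbmax (X ⟨0 + (k₂ - k₁), by omega⟩)
        (lt_of_le_of_lt (hYmem ⟨0, h⟩).1 hcon)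
        ⟨fun m => X ⟨m.val + (k₂ - k₁), by have := m.isLt; omega⟩, ?_, ?_, ?_⟩
      · intro m1 m2 h12
        have h12' := (Fin.lt_def).mp h12
        exact hXm (Fin.mk_lt_mk.mpr (by omega))
      · intro m1 m2 h12
        have h12' := (Fin.lt_def).mp h12
        exact hXv (Fin.mk_lt_mk.mpr (by omega))
      · intro m
        exact ⟨hXm.monotone (Fin.mk_le_mk.mpr (by omega)), (hXmem _).2⟩
    · rcases lt_trichotomy (A (X ⟨i + (k₂ - k₁), by omega⟩)) (A (Y ⟨i, h⟩)) with hval | hval | hval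
      · -- A(X_{i+Δ}) < A(Y_i): splice Y's tail into X, contradict lex-minimality of X
        have hIH : X ⟨i - 1 + (k₂ - k₁), by omega⟩ ≤ Y ⟨i - 1, by omega⟩ :=
          IH (i - 1) (by omega) (by omega)
        set Z : Fin k₂ → Fin N :=
          fun m => if hm : m.val < i + (k₂ - k₁) then X m
            else Y ⟨m.val - (k₂ - k₁), by have := m.isLt; omega⟩ with hZ
        have hZchain : IsChainIn N k₂ A a c Z := by
          refine ⟨?_, ?_, ?_⟩
          · intro m1 m2 h12
            have h12' := (Fin.lt_def).mp h12
            simp only [hZ]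
            split_ifs with hm1 hm2 hm2
            · exact hXm h12
            · calc X m1 ≤ X ⟨i - 1 + (k₂ - k₁), by omega⟩ :=
                    hXm.monotone (Fin.le_def.mpr (show m1.val ≤ i - 1 + (k₂ - k₁) by omega))
                _ ≤ Y ⟨i - 1, by omega⟩ := hIH
                _ < Y ⟨m2.val - (k₂ - k₁), by have := m2.isLt; omega⟩ :=
                    hYm (Fin.mk_lt_mk.mpr (by omega))
            · omega
            · exact hYm (Fin.mk_lt_mk.mpr (by omega))
          · intro m1 m2 h12
            have h12' := (Fin.lt_def).mp h12
            simp only [hZ, Function.comp]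
            split_ifs with hm1 hm2 hm2
            · exact hXv h12
            · calc A (X m1) ≤ A (X ⟨i - 1 + (k₂ - k₁), by omega⟩) :=
                    hXv.monotone (Fin.le_def.mpr (show m1.val ≤ i - 1 + (k₂ - k₁) by omega))
                _ < A (X ⟨i + (k₂ - k₁), by omega⟩) := hXv (Fin.mk_lt_mk.mpr (by omega))
                _ < A (Y ⟨i, h⟩) := hval
                _ ≤ A (Y ⟨m2.val - (k₂ - k₁), by have := m2.isLt; omega⟩) :=
                    hYv.monotone (Fin.mk_le_mk.mpr (by omega))
            · omega
            · exact hYv (Fin.mk_lt_mk.mpr (by omega))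
          · intro m
            simp only [hZ]
            split_ifs with hm
            · exact hXmem m
            · exact ⟨le_trans hab (hYmem _).1, (hYmem _).2⟩
        have hagree : ∀ l, l < (⟨i + (k₂ - k₁), by omega⟩ : Fin k₂) → Z l = X l := by
          intro l hl
          have hl' := (Fin.lt_def).mp hl
          simp only [hZ]
          rw [dif_pos hl']
        have hfin := hXmin Z hZchain ⟨i + (k₂ - k₁), by omega⟩ hagree
        have hzy : Z ⟨i + (k₂ - k₁), by omega⟩ = Y ⟨i, h⟩ := by
          simp only [hZ]
          exact (dif_neg (Nat.lt_irrefl _)).trans (congrArg Y (Fin.ext (Nat.add_sub_cancel i (k₂ - k₁))))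
        exact absurd (le_of_le_of_eq hfin hzy) (not_le.mpr hcon)
      · -- equal values: impossible since A is injective
        rw [hA hval] at hcon
        exact lt_irrefl _ hcon
      · -- A(Y_i) < A(X_{i+Δ}): splice X's tail onto (Y₁,…,Yᵢ): a length-k₁ chain right of b
        refine hsbmax (Y ⟨1, by omega⟩)
          (lt_of_le_of_lt (hYmem ⟨0, by omega⟩).1 (hYm (Fin.mk_lt_mk.mpr (by omega))))
          ⟨fun m => if hm : m.val + 1 ≤ i then Y ⟨m.val + 1, by omega⟩
            else X ⟨m.val + (k₂ - k₁), by have := m.isLt; omega⟩, ?_, ?_, ?_⟩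
        · intro m1 m2 h12
          have h12' := (Fin.lt_def).mp h12
          dsimp only
          split_ifs with hm1 hm2 hm2
          · exact hYm (Fin.mk_lt_mk.mpr (by omega))
          · calc Y ⟨m1.val + 1, by omega⟩ ≤ Y ⟨i, h⟩ :=
                  hYm.monotone (Fin.mk_le_mk.mpr (by omega))
              _ < X ⟨i + (k₂ - k₁), by omega⟩ := hcon
              _ ≤ X ⟨m2.val + (k₂ - k₁), by have := m2.isLt; omega⟩ :=
                  hXm.monotone (Fin.mk_le_mk.mpr (by omega))
          · omega
          · exact hXm (Fin.mk_lt_mk.mpr (by omega))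
        · intro m1 m2 h12
          have h12' := (Fin.lt_def).mp h12
          dsimp only [Function.comp]
          split_ifs with hm1 hm2 hm2
          · exact hYv (Fin.mk_lt_mk.mpr (by omega))
          · calc A (Y ⟨m1.val + 1, by omega⟩) ≤ A (Y ⟨i, h⟩) :=
                  hYv.monotone (Fin.mk_le_mk.mpr (by omega))
              _ < A (X ⟨i + (k₂ - k₁), by omega⟩) := hval
              _ ≤ A (X ⟨m2.val + (k₂ - k₁), by have := m2.isLt; omega⟩) :=
                  hXv.monotone (Fin.mk_le_mk.mpr (by omega))
          · omega
          · exact hXv (Fin.mk_lt_mk.mpr (by omega))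
        · intro m
          dsimp only
          split_ifs with hm
          · exact ⟨hYm.monotone (Fin.mk_le_mk.mpr (by omega)), (hYmem _).2⟩
          · constructor
            · calc Y ⟨1, by omega⟩ ≤ Y ⟨i, h⟩ := hYm.monotone (Fin.mk_le_mk.mpr (by omega))
                _ ≤ X ⟨i + (k₂ - k₁), by omega⟩ := le_of_lt hcon
                _ ≤ X ⟨m.val + (k₂ - k₁), by have := m.isLt; omega⟩ :=
                    hXm.monotone (Fin.mk_le_mk.mpr (by omega))
            · exact (hXmem _).2
end

section
/- Consecutive-segment monotonicity for approximate greedy covers: with notation as in the approximate greedy shift lemma, let P' be the next shortest prefix (starting at the first index b of S) containing an increasing subsequence of length k₂, and X' = (x'₁,...,x'_{k₂}) its lexicographically minimal such subsequence. Then for all 1 ≤ i ≤ k₁, position(x'_i) ≥ position(y_i); consequently the starting positions of consecutive segments produced by the greedy algorithm shift by at least Δ = k₂ − k₁ chain elements, so at most ⌈k₁/Δ⌉ of the produced segments can pairwise intersect. -/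
lemma finStrictMono_of_adj {K : ℕ} {α : Type*} [Preorder α] {f : Fin K → α}
    (h : ∀ (l : ℕ) (hl : l + 1 < K), f ⟨l, Nat.lt_of_succ_lt hl⟩ < f ⟨l + 1, hl⟩) :
    StrictMono f := by
  have key : ∀ (b : ℕ) (hb : b < K) (a : ℕ) (ha : a < K), a < b → f ⟨a, ha⟩ < f ⟨b, hb⟩ := by
    intro b
    induction b with
    | zero => intro _ _ _ h'; omega
    | succ n ih =>
      intro hb a ha hab
      rcases Nat.lt_succ_iff_lt_or_eq.mp hab with h' | h'
      · exact lt_trans (ih (Nat.lt_of_succ_lt hb) a ha h') (h n hb)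
      · subst h'; exact h a hb
  intro a b hab
  have := key b.1 b.2 a.1 a.2 hab
  simpa using this

lemma glue_chain {N K : ℕ} {A : Fin N → ℝ} {p q : Fin N} {T : ℕ}
    (u v : ℕ → Fin N)
    (hu : ∀ l, l + 1 < T → u l < u (l+1) ∧ A (u l) < A (u (l+1)))
    (hv : ∀ l, T ≤ l → l + 1 < K → v l < v (l+1) ∧ A (v l) < A (v (l+1)))
    (hj : 0 < T → T < K → u (T-1) < v T ∧ A (u (T-1)) < A (v T))
    (hubd : ∀ l, l < T → p ≤ u l ∧ u l ≤ q)
    (hvbd : ∀ l, T ≤ l → l < K → p ≤ v l ∧ v l ≤ q) :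
    IsChainIn N K A p q (fun l : Fin K => if l.1 < T then u l.1 else v l.1) := by
  have adj : ∀ (l : ℕ), l + 1 < K →
      ((if l < T then u l else v l) < (if l + 1 < T then u (l+1) else v (l+1)) ∧
       A (if l < T then u l else v l) < A (if l + 1 < T then u (l+1) else v (l+1))) := by
    intro l hl
    by_cases h1 : l + 1 < T
    · rw [if_pos (by omega), if_pos h1]
      exact hu l h1
    · by_cases h2 : l < T
      · have hlT : l = T - 1 := by omega
        rw [if_pos h2, if_neg h1]
        have h3 : T - 1 + 1 = T := by omega
        rw [hlT, h3]
        exact hj (by omega) (by omega)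
      · rw [if_neg h2, if_neg h1]
        exact hv l (by omega) hl
  refine ⟨finStrictMono_of_adj ?_, finStrictMono_of_adj ?_, ?_⟩
  · intro l hl; exact (adj l hl).1
  · intro l hl; exact (adj l hl).2
  · intro m
    by_cases h : m.1 < T
    · simp only [if_pos h]; exact hubd m.1 h
    · simp only [if_neg h]; exact hvbd m.1 (by omega) m.2

lemma no_long_chain_left {N k₁ : ℕ} {A : Fin N → ℝ} {b c : Fin N} (hk₁ : 1 ≤ k₁)
    (hsbmax : ∀ b'' : Fin N, b < b'' → ¬ HasChain N k₁ A b'' c) :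
    ¬ HasChain N (k₁+1) A b c := by
  rintro ⟨g, hg1, hg2, hg3⟩
  have h01 : g ⟨0, by omega⟩ < g ⟨1, by omega⟩ :=
    hg1 (show (⟨0, by omega⟩ : Fin (k₁+1)) < ⟨1, by omega⟩ from Fin.mk_lt_mk.mpr one_pos)
  refine hsbmax (g ⟨1, by omega⟩) (lt_of_le_of_lt (hg3 ⟨0, by omega⟩).1 h01)
    ⟨fun l => g ⟨l.1 + 1, by omega⟩, ?_, ?_, fun m => ⟨?_, (hg3 _).2⟩⟩
  · intro u v huv
    exact hg1 (show (⟨u.1+1, by omega⟩ : Fin (k₁+1)) < ⟨v.1+1, by omega⟩ from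
      Fin.mk_lt_mk.mpr (by omega))
  · intro u v huv
    exact hg2 (show (⟨u.1+1, by omega⟩ : Fin (k₁+1)) < ⟨v.1+1, by omega⟩ from
      Fin.mk_lt_mk.mpr (by omega))
  · exact hg1.monotone (show (⟨1, by omega⟩ : Fin (k₁+1)) ≤ ⟨m.1+1, by omega⟩ from
      Fin.mk_le_mk.mpr (by omega))

lemma no_long_chain_right {N k₂ : ℕ} {A : Fin N → ℝ} {b d : Fin N} (hk₂ : 1 ≤ k₂)
    (hpdmin : ∀ d' : Fin N, d' < d → ¬ HasChain N k₂ A b d') :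
    ¬ HasChain N (k₂+1) A b d := by
  rintro ⟨g, hg1, hg2, hg3⟩
  have hlast : g ⟨k₂ - 1, by omega⟩ < g ⟨k₂, by omega⟩ :=
    hg1 (Fin.mk_lt_mk.mpr (by omega))
  refine hpdmin (g ⟨k₂ - 1, by omega⟩) (lt_of_lt_of_le hlast (hg3 _).2)
    ⟨fun l => g ⟨l.1, by omega⟩, ?_, ?_, fun m => ⟨(hg3 _).1, ?_⟩⟩
  · intro u v huv
    exact hg1 (show (⟨u.1, by omega⟩ : Fin (k₂+1)) < ⟨v.1, by omega⟩ from
      Fin.mk_lt_mk.mpr (by exact huv))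
  · intro u v huv
    exact hg2 (show (⟨u.1, by omega⟩ : Fin (k₂+1)) < ⟨v.1, by omega⟩ from
      Fin.mk_lt_mk.mpr (by exact huv))
  · exact hg1.monotone (show (⟨m.1, by omega⟩ : Fin (k₂+1)) ≤ ⟨k₂ - 1, by omega⟩ from
      Fin.mk_le_mk.mpr (by omega))

theorem greedy_consecutive_segments (N k₁ k₂ : ℕ) (hk₁ : 1 ≤ k₁) (hk : k₁ < k₂)
    (A : Fin N → ℝ) (hA : Function.Injective A)
    (a b c : Fin N)
    -- (a,c) is the shortest prefix containing a chain of length k₂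
    (hpc : HasChain N k₂ A a c)
    (hpcmin : ∀ c' : Fin N, c' < c → ¬ HasChain N k₂ A a c')
    -- (b,c) is the shortest suffix of (a,c) containing a chain of length k₁
    (hab : a ≤ b)
    (hsb : HasChain N k₁ A b c)
    (hsbmax : ∀ b'' : Fin N, b < b'' → ¬ HasChain N k₁ A b'' c)
    -- Y is the lexicographically minimal chain of length k₁ in (b,c)
    (Y : Fin k₁ → Fin N) (hY : IsChainIn N k₁ A b c Y)
    (hYmin : ∀ Z : Fin k₁ → Fin N, IsChainIn N k₁ A b c Z →
      ∀ m : Fin k₁, (∀ l, l < m → Z l = Y l) → Y m ≤ Z m)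
    -- (b,d) is the next shortest prefix (starting at b) with a chain of length k₂
    (d : Fin N)
    (hpd : HasChain N k₂ A b d)
    (hpdmin : ∀ d' : Fin N, d' < d → ¬ HasChain N k₂ A b d')
    -- X' is the lexicographically minimal chain of length k₂ in (b,d)
    (X' : Fin k₂ → Fin N) (hX' : IsChainIn N k₂ A b d X')
    (hX'min : ∀ Z : Fin k₂ → Fin N, IsChainIn N k₂ A b d Z →
      ∀ m : Fin k₂, (∀ l, l < m → Z l = X' l) → X' m ≤ Z m) :
    ∀ (i : ℕ) (h : i < k₁), Y ⟨i, h⟩ ≤ X' ⟨i, by omega⟩ := by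
  classical
  have L1 : ¬ HasChain N (k₁+1) A b c := no_long_chain_left hk₁ hsbmax
  have L2 : ¬ HasChain N (k₂+1) A b d := no_long_chain_right (by omega) hpdmin
  -- total versions of Y and X'
  set YY : ℕ → Fin N := fun l => if h : l < k₁ then Y ⟨l, h⟩ else b with hYY
  set XX : ℕ → Fin N := fun l => if h : l < k₂ then X' ⟨l, h⟩ else b with hXX
  have hYYlt : ∀ (l : ℕ) (h : l < k₁), YY l = Y ⟨l, h⟩ := fun l h => dif_pos h
  have hXXlt : ∀ (l : ℕ) (h : l < k₂), XX l = X' ⟨l, h⟩ := fun l h => dif_pos h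
  have hYmono : ∀ l l', l < l' → l' < k₁ → YY l < YY l' ∧ A (YY l) < A (YY l') := by
    intro l l' h hl'
    rw [hYYlt l (by omega), hYYlt l' hl']
    exact ⟨hY.1 (Fin.mk_lt_mk.mpr h), hY.2.1 (Fin.mk_lt_mk.mpr h)⟩
  have hXmono : ∀ l l', l < l' → l' < k₂ → XX l < XX l' ∧ A (XX l) < A (XX l') := by
    intro l l' h hl'
    rw [hXXlt l (by omega), hXXlt l' hl']
    exact ⟨hX'.1 (Fin.mk_lt_mk.mpr h), hX'.2.1 (Fin.mk_lt_mk.mpr h)⟩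
  have hXmonole : ∀ l l', l ≤ l' → l' < k₂ → XX l ≤ XX l' := by
    intro l l' h hl'
    rcases eq_or_lt_of_le h with rfl | h'
    · exact le_refl _
    · exact le_of_lt (hXmono l l' h' hl').1
  have hYbd : ∀ l, l < k₁ → b ≤ YY l ∧ YY l ≤ c := by
    intro l hl; rw [hYYlt l hl]; exact hY.2.2 _
  have hXbd : ∀ l, l < k₂ → b ≤ XX l ∧ XX l ≤ d := by
    intro l hl; rw [hXXlt l hl]; exact hX'.2.2 _
  -- c < d
  have hcd : c < d := by
    by_contra hdc
    push_neg at hdc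
    have h01 : XX 0 < XX 1 := (hXmono 0 1 (by omega) (by omega)).1
    rw [hXXlt 0 (by omega)] at h01
    refine hsbmax (XX 1) (lt_of_le_of_lt (hX'.2.2 ⟨0, by omega⟩).1 h01)
      ⟨fun l => XX (l.1 + 1), finStrictMono_of_adj ?_, finStrictMono_of_adj ?_,
        fun m => ⟨hXmonole 1 (m.1+1) (by omega) (by omega),
          le_trans (hXbd (m.1+1) (by omega)).2 hdc⟩⟩
    · intro l hl; exact (hXmono (l+1) (l+2) (by omega) (by omega)).1
    · intro l hl; exact (hXmono (l+1) (l+2) (by omega) (by omega)).2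
  -- main induction
  intro i
  induction i using Nat.strong_induction_on with
  | _ i IH =>
  intro hik
  by_contra hcon0
  push_neg at hcon0
  have hik2 : i < k₂ := by omega
  have hcon : XX i < YY i := by
    rw [hXXlt i hik2, hYYlt i hik]; exact hcon0
  -- bounds for X' entries below Y i
  have hYc : YY i ≤ c := (hYbd i hik).2
  have hIH' : ∀ l, l < i → YY l ≤ XX l := by
    intro l hl
    rw [hYYlt l (by omega), hXXlt l (by omega)]
    exact IH l hl (by omega)
  -- Step 1 : A (YY i) < A (XX i)
  have hAYX : A (YY i) < A (XX i) := by
    rcases lt_trichotomy (A (XX i)) (A (YY i)) with hv | hv | hv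
    · exfalso
      apply L1
      refine ⟨_, glue_chain (T := i+1) XX (fun l => YY (l-1)) ?_ ?_ ?_ ?_ ?_⟩
      · intro l hl; exact hXmono l (l+1) (by omega) (by omega)
      · intro l hl1 hl2
        beta_reduce
        have h2 : l + 1 - 1 = l := by omega
        rw [h2]
        exact hYmono (l-1) l (by omega) (by omega)
      · intro _ _
        beta_reduce
        have h1 : i + 1 - 1 = i := by omega
        rw [h1]
        exact ⟨hcon, hv⟩
      · intro l hl
        refine ⟨(hXbd l (by omega)).1, ?_⟩
        calc XX l ≤ XX i := hXmonole l i (by omega) hik2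
        _ ≤ YY i := le_of_lt hcon
        _ ≤ c := hYc
      · intro l hl1 hl2
        beta_reduce
        exact hYbd (l-1) (by omega)
    · exfalso
      have : XX i = YY i := by
        rw [hXXlt i hik2, hYYlt i hik] at hv ⊢
        exact hA hv
      rw [this] at hcon; exact lt_irrefl _ hcon
    · exact hv
  -- case split on prefix equality
  by_cases hpe : ∀ m, m < i → YY m = XX m
  · -- prefix equal : inner upward induction
    have inner : ∀ j, j < k₁ → i ≤ j → XX j < YY j := by
      intro j
      induction j using Nat.strong_induction_on with
      | _ j IHj =>
      intro hjk hij
      rcases eq_or_lt_of_le hij with rfl | hlt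
      · exact hcon
      · have hinv : ∀ l, i ≤ l → l < j → XX l < YY l := by
          intro l h1 h2; exact IHj l h2 (by omega) h1
        -- chain3 : the splice (Y_<i, X'_[i..j'), Y_[j'..)) is a k₁-chain for i < j' ≤ k₁
        have chain3 : ∀ j', i < j' → j' ≤ k₁ → (∀ l, i ≤ l → l < j' → XX l < YY l) →
            (j' < k₁ → A (XX (j'-1)) < A (YY j')) → False := by
          intro j' hij' hj'k hinv' hjun
          have hZ : IsChainIn N k₁ A b c
              (fun l : Fin k₁ => if l.1 < i then YY l.1 else
                (fun t => if t < j' then XX t else YY t) l.1) :=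
            glue_chain (T := i) YY (fun t => if t < j' then XX t else YY t)
              (fun l hl => hYmono l (l+1) (by omega) (by omega))
              (by
                intro l hl1 hl2
                beta_reduce
                by_cases h1 : l + 1 < j'
                · rw [if_pos (by omega), if_pos h1]
                  exact hXmono l (l+1) (by omega) (by omega)
                · by_cases h2 : l < j'
                  · have hlj : l = j' - 1 := by omega
                    rw [if_pos h2, if_neg h1]
                    constructor
                    · calc XX l < YY l := hinv' l (by omega) h2
                      _ < YY (l+1) := (hYmono l (l+1) (by omega) (by omega)).1
                    · have := hjun (by omega)
                      rw [hlj]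
                      have h3 : j' - 1 + 1 = j' := by omega
                      rw [h3]
                      exact this
                  · rw [if_neg h2, if_neg h1]
                    exact hYmono l (l+1) (by omega) (by omega))
              (by
                intro h0 hiK
                beta_reduce
                rw [if_pos (by omega : i < j')]
                have hpeq : YY (i-1) = XX (i-1) := hpe (i-1) (by omega)
                constructor
                · rw [hpeq]; exact (hXmono (i-1) i (by omega) (by omega)).1
                · rw [hpeq]; exact (hXmono (i-1) i (by omega) (by omega)).2)
              (fun l hl => hYbd l (by omega))
              (by
                intro l hl1 hl2
                beta_reduce
                by_cases h2 : l < j'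
                · rw [if_pos h2]
                  exact ⟨(hXbd l (by omega)).1,
                    le_trans (le_of_lt (hinv' l hl1 h2)) (hYbd l (by omega)).2⟩
                · rw [if_neg h2]
                  exact hYbd l hl2)
          have hmin := hYmin _ hZ ⟨i, hik⟩ (by
            intro l hllt
            have hli : l.1 < i := hllt
            beta_reduce
            rw [if_pos hli, hYYlt l.1 (by omega)])
          beta_reduce at hmin
          rw [show ((⟨i, hik⟩ : Fin k₁) : ℕ) = i from rfl] at hmin
          rw [if_neg (lt_irrefl i)] at hmin
          beta_reduce at hmin
          rw [if_pos hij', hXXlt i hik2] at hmin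
          exact absurd hmin (not_le.mpr hcon0)
        -- β : A (YY j) < A (XX (j-1))
        have hβ : A (YY j) < A (XX (j-1)) := by
          by_contra hle
          push_neg at hle
          have hne : XX (j-1) ≠ YY j := by
            have h1 : XX (j-1) < YY (j-1) := hinv (j-1) (by omega) (by omega)
            have h2 : YY (j-1) < YY j := (hYmono (j-1) j (by omega) hjk).1
            exact ne_of_lt (lt_trans h1 h2)
          have hlt' : A (XX (j-1)) < A (YY j) := by
            rcases eq_or_lt_of_le hle with heq | h'
            · exfalso
              apply hne
              rw [hXXlt (j-1) (by omega), hYYlt j hjk] at heq ⊢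
              exact hA heq
            · exact h'
          exact chain3 j hlt hjk.le hinv (fun _ => hlt')
        -- now conclude XX j < YY j
        by_contra hge
        push_neg at hge  -- YY j ≤ XX j
        rcases eq_or_lt_of_le hge with heq | hlt2
        · -- equal: value contradiction
          have : A (XX (j-1)) < A (XX j) := (hXmono (j-1) j (by omega) (by omega)).2
          rw [← heq] at this
          linarith
        · -- Y j < X' j : build (k₂+1)-chain
          apply L2
          refine ⟨_, glue_chain (T := j+1) YY (fun l => XX (l-1)) ?_ ?_ ?_ ?_ ?_⟩
          · intro l hl; exact hYmono l (l+1) (by omega) (by omega)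
          · intro l hl1 hl2
            beta_reduce
            have h2 : l + 1 - 1 = l := by omega
            rw [h2]
            exact hXmono (l-1) l (by omega) (by omega)
          · intro _ _
            beta_reduce
            have h1 : j + 1 - 1 = j := by omega
            rw [h1]
            refine ⟨hlt2, ?_⟩
            calc A (YY j) < A (XX (j-1)) := hβ
            _ < A (XX j) := (hXmono (j-1) j (by omega) (by omega)).2
          · intro l hl
            exact ⟨(hYbd l (by omega)).1, le_trans (hYbd l (by omega)).2 hcd.le⟩
          · intro l hl1 hl2
            beta_reduce
            exact hXbd (l-1) (by omega)
    -- endgame : splice (Y_<i, X'_[i..k₁)) is a k₁-chain, contradict hYmin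
    -- reuse chain3-style construction directly
    have hZ : IsChainIn N k₁ A b c
        (fun l : Fin k₁ => if l.1 < i then YY l.1 else XX l.1) :=
      glue_chain (T := i) YY XX
        (fun l hl => hYmono l (l+1) (by omega) (by omega))
        (fun l hl1 hl2 => hXmono l (l+1) (by omega) (by omega))
        (by
          intro h0 hiK
          have hpeq : YY (i-1) = XX (i-1) := hpe (i-1) (by omega)
          rw [hpeq]
          exact hXmono (i-1) i (by omega) (by omega))
        (fun l hl => hYbd l (by omega))
        (fun l hl1 hl2 => ⟨(hXbd l (by omega)).1,
          le_trans (le_of_lt (inner l hl2 hl1)) (hYbd l hl2).2⟩)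
    have hmin := hYmin _ hZ ⟨i, hik⟩ (by
      intro l hllt
      have hli : l.1 < i := hllt
      beta_reduce
      rw [if_pos hli, hYYlt l.1 (by omega)])
    beta_reduce at hmin
    rw [show ((⟨i, hik⟩ : Fin k₁) : ℕ) = i from rfl] at hmin
    rw [if_neg (lt_irrefl i), hXXlt i hik2] at hmin
    exact absurd hmin (not_le.mpr hcon0)
  · -- prefix differs : lex contradiction with hX'min
    push_neg at hpe
    obtain ⟨m₀, hm₀i, hm₀ne⟩ := hpe
    have hex : ∃ m, m < i ∧ YY m ≠ XX m := ⟨m₀, hm₀i, hm₀ne⟩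
    obtain ⟨m, ⟨hmi, hmne⟩, hmin⟩ := Nat.lt_wfRel.wf.has_min
      {m | m < i ∧ YY m ≠ XX m} hex
    have hmeq : ∀ l, l < m → YY l = XX l := by
      intro l hl
      by_contra hne
      exact hmin l ⟨by omega, hne⟩ hl
    have hipos : 0 < i := by omega
    have hZ : IsChainIn N k₂ A b d
        (fun l : Fin k₂ => if l.1 < i then YY l.1 else XX l.1) :=
      glue_chain (T := i) YY XX
        (fun l hl => hYmono l (l+1) (by omega) (by omega))
        (fun l hl1 hl2 => hXmono l (l+1) (by omega) (by omega))
        (by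
          intro h0 hiK
          constructor
          · exact lt_of_le_of_lt (hIH' (i-1) (by omega))
              (hXmono (i-1) i (by omega) (by omega)).1
          · exact lt_trans (hYmono (i-1) i (by omega) (by omega)).2 hAYX)
        (fun l hl => ⟨(hYbd l (by omega)).1, le_trans (hYbd l (by omega)).2 hcd.le⟩)
        (fun l hl1 hl2 => hXbd l hl2)
    have hm2 : m < k₂ := by omega
    have hmin2 := hX'min _ hZ ⟨m, hm2⟩ (by
      intro l hllt
      have hli : l.1 < m := hllt
      beta_reduce
      rw [if_pos (show l.1 < i by omega), hmeq l.1 hli, hXXlt l.1 (by omega)])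
    beta_reduce at hmin2
    rw [show ((⟨m, hm2⟩ : Fin k₂) : ℕ) = m from rfl] at hmin2
    rw [if_pos hmi] at hmin2
    have h1 : YY m ≤ XX m := hIH' m hmi
    have h2 : YY m = XX m := by
      refine le_antisymm h1 ?_
      rw [hXXlt m hm2]
      exact hmin2
    exact hmne h2
end
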